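/- arXiv:2511.10660 — 2 statements merged into one kernel-verified Lean document; each statement's English description precedes it below -/
import Mathlib

section
/- Let A be a finite alphabet, n ≥ 1, p_data a probability mass function on A^n, and for each k ∈ {1, ..., K} let p_k(· | s) be strictly positive conditional probability mass functions on A indexed by prefixes s ∈ A^{<n}, with joints P_k(x) = ∏_{i=1}^n p_k(x_i | x_{<i}). For weights α with α_k ∈ [0,1] and ∑_k α_k = 1, define π_α(a | s) = (∏_k p_k(a | s)^{α_k}) / Z(α, s), Z(α, s) = ∑_{a' ∈ A} ∏_k p_k(a' | s)^{α_k}, and Π_α(x) = ∏_{i=1}^n π_α(x_i | x_{<i}). Then H(p_data, Π_α) = ∑_{k=1}^K α_k · H(p_data, P_k) + ∑_{x ∈ A^n} p_data(x) · ∑_{i=1}^n log Z(α, x_{<i}). -/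
/-- Cross-entropy between two probability mass functions on a finite set. -/
noncomputable def crossEntropy {S : Type*} [Fintype S] (p q : S → ℝ) : ℝ :=
  -∑ s, p s * Real.log (q s)

/-- The joint distribution on length-`n` sequences induced by an autoregressive
family of conditionals `q(· | s)` indexed by prefixes `s`. -/
noncomputable def jointAR {A : Type*} (q : List A → A → ℝ) (n : ℕ) (x : Fin n → A) : ℝ :=
  ∏ i : Fin n, q ((List.ofFn x).take i) (x i)

/-- Weighted product-of-experts conditionals. -/
noncomputable def wpoeCond {A : Type*} [Fintype A] {K : ℕ}
    (p : Fin K → List A → A → ℝ) (α : Fin K → ℝ) (s : List A) (a : A) : ℝ :=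
  (∏ k, (p k s a) ^ (α k)) / ∑ a', ∏ k, (p k s a') ^ (α k)

/-- The normalizer of the weighted product of experts at prefix `s`. -/
noncomputable def wpoeZ {A : Type*} [Fintype A] {K : ℕ}
    (p : Fin K → List A → A → ℝ) (α : Fin K → ℝ) (s : List A) : ℝ :=
  ∑ a', ∏ k, (p k s a') ^ (α k)

/-- Decomposition of the joint wPoE cross-entropy: weighted average of the
experts' joint cross-entropies plus the expected sum of log-normalizers. -/
theorem stmt3 {A : Type*} [Fintype A] {K n : ℕ} (hn : 1 ≤ n)
    (pdata : (Fin n → A) → ℝ) (hpd0 : ∀ x, 0 ≤ pdata x) (hpd1 : ∑ x, pdata x = 1)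
    (p : Fin K → List A → A → ℝ)
    (hp0 : ∀ k (s : List A), s.length < n → ∀ a, 0 < p k s a)
    (hp1 : ∀ k (s : List A), s.length < n → ∑ a, p k s a = 1)
    (α : Fin K → ℝ) (hα : ∀ k, α k ∈ Set.Icc (0 : ℝ) 1) (hα1 : ∑ k, α k = 1) :
    crossEntropy pdata (jointAR (wpoeCond p α) n) =
      (∑ k, α k * crossEntropy pdata (jointAR (p k) n)) +
        ∑ x : Fin n → A, pdata x *
          ∑ i : Fin n, Real.log (wpoeZ p α ((List.ofFn x).take i)) := by
  -- A is nonempty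
  have hA : Nonempty A := by
    by_contra h
    rw [not_nonempty_iff] at h
    haveI : IsEmpty (Fin n → A) := ⟨fun f => h.false (f ⟨0, hn⟩)⟩
    simp at hpd1
  -- key pointwise identity
  have key : ∀ x : Fin n → A,
      Real.log (jointAR (wpoeCond p α) n x) =
        (∑ k, α k * Real.log (jointAR (p k) n x)) -
          ∑ i : Fin n, Real.log (wpoeZ p α ((List.ofFn x).take i)) := by
    intro x
    set s : Fin n → List A := fun i => (List.ofFn x).take i with hs
    have hlen : ∀ i : Fin n, (s i).length < n := by
      intro i
      simp only [hs, List.length_take, List.length_ofFn]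
      omega
    have hppos : ∀ k (i : Fin n) a, 0 < p k (s i) a := fun k i a => hp0 k (s i) (hlen i) a
    have hZpos : ∀ i : Fin n, 0 < wpoeZ p α (s i) := by
      intro i
      apply Finset.sum_pos
      · intro a _
        exact Finset.prod_pos fun k _ => Real.rpow_pos_of_pos (hppos k i a) _
      · exact Finset.univ_nonempty
    have hπpos : ∀ i : Fin n, 0 < wpoeCond p α (s i) (x i) := by
      intro i
      apply div_pos
      · exact Finset.prod_pos fun k _ => Real.rpow_pos_of_pos (hppos k i (x i)) _
      · exact hZpos i
    have hlogπ : ∀ i : Fin n, Real.log (wpoeCond p α (s i) (x i)) =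
        (∑ k, α k * Real.log (p k (s i) (x i))) - Real.log (wpoeZ p α (s i)) := by
      intro i
      have hprodpos : (0:ℝ) < ∏ k, (p k (s i) (x i)) ^ (α k) :=
        Finset.prod_pos fun k _ => Real.rpow_pos_of_pos (hppos k i (x i)) _
      have hdef : wpoeCond p α (s i) (x i) =
          (∏ k, (p k (s i) (x i)) ^ (α k)) / wpoeZ p α (s i) := rfl
      rw [hdef, Real.log_div hprodpos.ne' (hZpos i).ne']
      have : Real.log (∏ k, (p k (s i) (x i)) ^ (α k)) =
          ∑ k, α k * Real.log (p k (s i) (x i)) := by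
        rw [Real.log_prod fun k _ => (Real.rpow_pos_of_pos (hppos k i (x i)) _).ne']
        exact Finset.sum_congr rfl fun k _ => Real.log_rpow (hppos k i (x i)) _
      rw [this]
    have hlogJ : ∀ k, Real.log (jointAR (p k) n x) = ∑ i : Fin n, Real.log (p k (s i) (x i)) := by
      intro k
      rw [jointAR, Real.log_prod fun i _ => (hppos k i (x i)).ne']
    have hlogW : Real.log (jointAR (wpoeCond p α) n x) =
        ∑ i : Fin n, Real.log (wpoeCond p α (s i) (x i)) := by
      rw [jointAR, Real.log_prod fun i _ => (hπpos i).ne']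
    rw [hlogW]
    calc ∑ i : Fin n, Real.log (wpoeCond p α (s i) (x i))
        = ∑ i : Fin n, ((∑ k, α k * Real.log (p k (s i) (x i))) - Real.log (wpoeZ p α (s i))) :=
          Finset.sum_congr rfl fun i _ => hlogπ i
      _ = (∑ i : Fin n, ∑ k, α k * Real.log (p k (s i) (x i))) -
            ∑ i : Fin n, Real.log (wpoeZ p α (s i)) := Finset.sum_sub_distrib _ _
      _ = (∑ k, α k * Real.log (jointAR (p k) n x)) -
            ∑ i : Fin n, Real.log (wpoeZ p α (s i)) := by
          congr 1
          rw [Finset.sum_comm]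
          exact Finset.sum_congr rfl fun k _ => by rw [hlogJ k, Finset.mul_sum]
  -- assemble
  simp only [crossEntropy]
  have h1 : -∑ x : Fin n → A, pdata x * Real.log (jointAR (wpoeCond p α) n x) =
      -∑ x : Fin n → A, pdata x * ((∑ k, α k * Real.log (jointAR (p k) n x)) -
        ∑ i : Fin n, Real.log (wpoeZ p α ((List.ofFn x).take i))) := by
    congr 1
    exact Finset.sum_congr rfl fun x _ => by rw [key x]
  rw [h1]
  simp only [mul_sub, Finset.sum_sub_distrib, neg_sub, mul_neg]
  have h2 : ∑ x : Fin n → A, pdata x * ∑ k, α k * Real.log (jointAR (p k) n x) =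
      ∑ k, α k * ∑ x : Fin n → A, pdata x * Real.log (jointAR (p k) n x) := by
    simp only [Finset.mul_sum]
    rw [Finset.sum_comm]
    exact Finset.sum_congr rfl fun k _ => Finset.sum_congr rfl fun x _ => by ring
  rw [h2, Finset.sum_neg_distrib]
  ring
end

section
/- Let K ≥ 2 and let p^{(1)}, ..., p^{(K)} be categorical distributions on {1, ..., D}, i.e., p^{(k)}_j ≥ 0 and ∑_{j=1}^D p^{(k)}_j = 1 for each k. Let α_1, ..., α_K > 0 satisfy ∑_{k=1}^K α_k = 1 (so each α_k ∈ (0,1)). Then ∑_{j=1}^D ∏_{k=1}^K (p^{(k)}_j)^{α_k} = 1 if and only if p^{(1)} = p^{(2)} = ⋯ = p^{(K)}. -/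
open Finset Real

lemma geom_eq_arith_aux {K : ℕ} (α z : Fin K → ℝ) (hα0 : ∀ k, 0 < α k)
    (hα1 : ∑ k, α k = 1) (hz : ∀ k, 0 ≤ z k)
    (heq : ∏ k, z k ^ α k = ∑ k, α k * z k) : ∀ k l, z k = z l := by
  by_cases hpos : ∀ k, 0 < z k
  · -- use strict convexity of exp
    have key : ∀ j ∈ Finset.univ, ∀ k ∈ (Finset.univ : Finset (Fin K)),
        Real.log (z j) = Real.log (z k) := by
      apply strictConvexOn_exp.eq_of_le_map_sum (fun i _ => hα0 i) hα1
        (fun i _ => Set.mem_univ _)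
      have h1 : exp (∑ i, α i • Real.log (z i)) = ∏ k, z k ^ α k := by
        rw [Real.exp_sum]
        exact Finset.prod_congr rfl fun i _ => by
          rw [smul_eq_mul, mul_comm, Real.exp_mul, Real.exp_log (hpos i)]
      have h2 : ∑ i, α i • Real.exp (Real.log (z i)) = ∑ k, α k * z k :=
        Finset.sum_congr rfl fun i _ => by
          rw [smul_eq_mul, Real.exp_log (hpos i)]
      rw [h1, h2, heq]
    intro k l
    have := key k (Finset.mem_univ k) l (Finset.mem_univ l)
    calc z k = exp (Real.log (z k)) := (Real.exp_log (hpos k)).symm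
      _ = exp (Real.log (z l)) := by rw [this]
      _ = z l := Real.exp_log (hpos l)
  · push_neg at hpos
    obtain ⟨m, hm⟩ := hpos
    have hm0 : z m = 0 := le_antisymm hm (hz m)
    have hprod : ∏ k, z k ^ α k = 0 := by
      apply Finset.prod_eq_zero (Finset.mem_univ m)
      rw [hm0, Real.zero_rpow (hα0 m).ne']
    have hsum : ∑ k, α k * z k = 0 := by rw [← heq, hprod]
    have hall : ∀ k, z k = 0 := by
      intro k
      have := (Finset.sum_eq_zero_iff_of_nonneg
        (fun i _ => mul_nonneg (hα0 i).le (hz i))).mp hsum k (Finset.mem_univ k)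
      rcases mul_eq_zero.mp this with h | h
      · exact absurd h (hα0 k).ne'
      · exact h
    intro k l; rw [hall k, hall l]

/-- For `K ≥ 2` categorical distributions and strictly positive weights summing
to one, the sum of weighted geometric means equals one iff all the
distributions coincide. -/
theorem stmt6 {K D : ℕ} (hK : 2 ≤ K) (p : Fin K → Fin D → ℝ)
    (hp0 : ∀ k j, 0 ≤ p k j) (hp1 : ∀ k, ∑ j, p k j = 1)
    (α : Fin K → ℝ) (hα0 : ∀ k, 0 < α k) (hα1 : ∑ k, α k = 1) :
    (∑ j, ∏ k, (p k j) ^ (α k) = 1) ↔ ∀ k l : Fin K, p k = p l := by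
  have hKpos : 0 < K := by omega
  constructor
  · intro h k l
    -- pointwise equality with arithmetic mean
    have hle : ∀ j : Fin D, ∏ k, (p k j) ^ (α k) ≤ ∑ k, α k * p k j := fun j =>
      Real.geom_mean_le_arith_mean_weighted _ _ _ (fun i _ => (hα0 i).le) hα1
        (fun i _ => hp0 i j)
    have hsum : ∑ j, ∑ k, α k * p k j = 1 := by
      rw [Finset.sum_comm]
      calc ∑ k, ∑ j, α k * p k j = ∑ k, α k * ∑ j, p k j := by
            simp [Finset.mul_sum]
        _ = 1 := by simp_rw [hp1]; simpa using hα1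
    have heq : ∀ j ∈ (Finset.univ : Finset (Fin D)),
        ∏ k, (p k j) ^ (α k) = ∑ k, α k * p k j := by
      rw [← Finset.sum_eq_sum_iff_of_le (fun j _ => hle j), h, hsum]
    funext j
    exact geom_eq_arith_aux α (fun k => p k j) hα0 hα1 (fun k => hp0 k j)
      (heq j (Finset.mem_univ j)) k l
  · intro h
    set k0 : Fin K := ⟨0, hKpos⟩
    have : ∀ j, ∏ k, (p k j) ^ (α k) = p k0 j := by
      intro j
      have : ∏ k, (p k j) ^ (α k) = ∏ k, (p k0 j) ^ (α k) :=
        Finset.prod_congr rfl fun k _ => by rw [h k k0]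
      rw [this, ← Real.rpow_sum_of_nonneg (hp0 k0 j) (fun i _ => (hα0 i).le), hα1,
        Real.rpow_one]
    simp_rw [this]
    exact hp1 k0
end
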